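/- For fixed d ≥ 1 and any 0 ≤ k ≤ d−1, the sequence c_n(k) counting d-legal words of weight n or n+1 with prescribed prefix restrictions satisfies c_n(k) ≥ 2^{⌈n/2⌉}, and c_n(k) ~ r_k·λ(d)^{n/2} as n → ∞ for some constant r_k > 0, where λ(d) is the unique positive solution of λ^{d−1/2}(λ−2) = 1. -/

import Mathlib

/-- The four-letter alphabet `Σ = {a, b, A, B}`. -/
inductive Letter | a | b | A | B
deriving DecidableEq

/-- Letter weights: `w(a)=w(b)=2`, `w(A)=w(B)=3`. -/
def Letter.wt : Letter → ℕ
  | .a => 2 | .b => 2 | .A => 3 | .B => 3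

/-- The weight of a word is the sum of the weights of its letters. -/
def wtWord (x : List Letter) : ℕ := (x.map Letter.wt).sum

/-- A word `x` (0-indexed) is `d`-legal if whenever `x_m = A` then `x_{m−i} = a` for
`1 ≤ i ≤ min(d−1, m)`, and if `m ≥ d` then `x_{m−d} ∈ {a, A}`; and symmetrically for
`B` with `b`. -/
def dLegal (d : ℕ) (x : List Letter) : Prop :=
  ∀ m : ℕ, ∀ hm : m < x.length,
    (x.get ⟨m, hm⟩ = .A →
      (∀ i, 1 ≤ i → i ≤ d - 1 → i ≤ m → x.get ⟨m - i, by omega⟩ = .a) ∧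
      (d ≤ m → x.get ⟨m - d, by omega⟩ = .a ∨ x.get ⟨m - d, by omega⟩ = .A)) ∧
    (x.get ⟨m, hm⟩ = .B →
      (∀ i, 1 ≤ i → i ≤ d - 1 → i ≤ m → x.get ⟨m - i, by omega⟩ = .b) ∧
      (d ≤ m → x.get ⟨m - d, by omega⟩ = .b ∨ x.get ⟨m - d, by omega⟩ = .B))

/-- `cn d n k` is the number of `d`-legal words of weight `n` or `n+1` whose first `k`
letters avoid `A` and whose first `d` letters avoid `B`. -/
noncomputable def cn (d n k : ℕ) : ℕ :=
  Set.ncard {x : List Letter | dLegal d x ∧ (wtWord x = n ∨ wtWord x = n + 1) ∧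
    (∀ m, ∀ hm : m < x.length, m < k → x.get ⟨m, hm⟩ ≠ .A) ∧
    (∀ m, ∀ hm : m < x.length, m < d → x.get ⟨m, hm⟩ ≠ .B)}


/-!
Words over `{a, b}` of length `⌈n/2⌉` give the lower bound. For the asymptotics, split an
admissible word of weight `N` by its end: a final `a` or `b`, or a final block `a^(d-1) A`
(resp. `b^(d-1) B`) which legality forces to follow a letter of `{a, A}` (resp. `{b, B}`) once
`N ≥ 2d + 2`. Hence the number of admissible words of weight `N` satisfies
`g N = 2 g (N - 2) + g (N - 2d - 1)`, and so does `c_N`. With `μ = √λ` the defining equation of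
`λ` reads `2 / μ² + 1 / μ^(2d+1) = 1`, so `h_n = c_n / μ^n` obeys a recurrence
`h (n + 2d + 1) = p h (n + 2d - 1) + q h n` with positive weights `p + q = 1`. Along such a
recurrence the maximum of `h` over a window of `2d + 1` consecutive terms decreases and the
minimum increases; as the steps `2` and `2d + 1` are coprime, the minimum of one window
contributes a fixed fraction to every term `3 (2d + 1)` steps later, so both converge to the
same positive limit.
-/

open Filter Topology

instance : Fintype Letter := ⟨{.a, .b, .A, .B}, fun x => by cases x <;> decide⟩

lemma Letter.sum_univ {M : Type*} [AddCommMonoid M] (f : Letter → M) :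
    ∑ e, f e = f .a + f .b + f .A + f .B := by
  rw [show (Finset.univ : Finset Letter) = {.a, .b, .A, .B} from rfl]
  simp [add_assoc]

lemma List.drop_eq_replicate_of_forall {α : Type*} {u : List α} {c : α} {j : ℕ}
    (h : ∀ i (hi : i < u.length), j ≤ i → u[i] = c) :
    u.drop j = List.replicate (u.length - j) c :=
  List.eq_replicate_iff.2 ⟨by simp, fun e he => by
    obtain ⟨i, hi, rfl⟩ := List.getElem_of_mem he
    rw [List.getElem_drop]
    exact h _ _ (by omega)⟩

namespace LegalWords

lemma wtWord_append (x y : List Letter) : wtWord (x ++ y) = wtWord x + wtWord y := by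
  simp [wtWord]

lemma wtWord_replicate (j : ℕ) (e : Letter) : wtWord (List.replicate j e) = j * e.wt := by
  simp [wtWord, List.map_replicate, List.sum_replicate]

lemma wtWord_singleton (e : Letter) : wtWord [e] = e.wt := by simp [wtWord]

lemma wtWord_append_replicate_concat {d : ℕ} {c X : Letter} (hd : 1 ≤ d) (hc : c.wt = 2)
    (hX : X.wt = 3) (y : List Letter) :
    wtWord (y ++ List.replicate (d - 1) c ++ [X]) = wtWord y + (2 * d + 1) := by
  rw [wtWord_append, wtWord_append, wtWord_replicate, wtWord_singleton, hc, hX]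
  omega

lemma length_le_wtWord (x : List Letter) : x.length ≤ wtWord x := by
  induction x with
  | nil => simp
  | cons e x ih => cases e <;> simp [wtWord, Letter.wt] at ih ⊢ <;> omega

lemma finite_setOf_wtWord_eq (n : ℕ) : {x : List Letter | wtWord x = n}.Finite :=
  (List.finite_length_le Letter n).subset fun x hx => hx ▸ length_le_wtWord x

section CapRule

variable {d : ℕ} {X c : Letter} {u v x y : List Letter}

def CapAt (d : ℕ) (X c : Letter) (x : List Letter) (m : ℕ) (hm : m < x.length) : Prop :=
  (∀ i, 1 ≤ i → i ≤ d - 1 → i ≤ m → x[m - i] = c) ∧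
    (d ≤ m → x[m - d] = c ∨ x[m - d] = X)

def CapRule (d : ℕ) (X c : Letter) (x : List Letter) : Prop :=
  ∀ m (hm : m < x.length), x[m] = X → CapAt d X c x m hm

lemma dLegal_iff_capRule : dLegal d x ↔ CapRule d .A .a x ∧ CapRule d .B .b x := by
  simp only [dLegal, CapRule, CapAt, List.get_eq_getElem, ← forall_and]

lemma capAt_append {m : ℕ} (hm : m < u.length) :
    CapAt d X c (u ++ v) m (by simp; omega) ↔ CapAt d X c u m hm := by
  simp +contextual (disch := omega) only [CapAt, List.getElem_append_left]

lemma capRule_append : CapRule d X c (u ++ v) ↔ CapRule d X c u ∧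
    ∀ m (hm : m < (u ++ v).length), u.length ≤ m → (u ++ v)[m] = X →
      CapAt d X c (u ++ v) m hm := by
  refine ⟨fun h => ⟨fun m hm hX => (capAt_append hm).1 (h m _ ?_), fun m hm _ => h m hm⟩,
    fun ⟨hu, hv⟩ m hm hX => ?_⟩
  · rwa [List.getElem_append_left hm]
  · by_cases hmu : m < u.length
    · exact (capAt_append hmu).2 (hu m hmu (by rwa [List.getElem_append_left hmu] at hX))
    · exact hv m hm (by omega) hX

lemma CapRule.of_append (h : CapRule d X c (u ++ v)) : CapRule d X c u :=
  (capRule_append.1 h).1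

lemma capRule_of_notMem (hx : X ∉ x) : CapRule d X c x :=
  fun _ hm hX => absurd (hX ▸ List.getElem_mem hm) hx

lemma CapRule.append_of_notMem (hu : CapRule d X c u) (hv : X ∉ v) :
    CapRule d X c (u ++ v) := by
  refine capRule_append.2 ⟨hu, fun m hm hmu hX => absurd ?_ hv⟩
  rw [List.getElem_append_right hmu] at hX
  exact hX ▸ List.getElem_mem _

lemma CapRule.concat (hu : CapRule d X c u)
    (hX : CapAt d X c (u ++ [X]) u.length (by simp)) : CapRule d X c (u ++ [X]) :=
  capRule_append.2 ⟨hu, fun m hm hmu _ => by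
    obtain rfl : m = u.length := by simp at hm; omega
    exact hX⟩

lemma CapAt.eq_replicate_or_eq_append (hd : 1 ≤ d)
    (h : CapAt d X c (u ++ [X]) u.length (by simp)) :
    (∃ j < d, u = List.replicate j c) ∨
      ∃ y, (y.getLast? = some c ∨ y.getLast? = some X) ∧ u = y ++ List.replicate (d - 1) c := by
  have htail : ∀ i (hi : i < u.length), u.length - (d - 1) ≤ i → u[i] = c := fun i hi hi' => by
    simpa [Nat.sub_sub_self hi.le, List.getElem_append_left hi] using
      h.1 (u.length - i) (by omega) (by omega) (by omega)
  by_cases hlen : u.length < d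
  · have := List.drop_eq_replicate_of_forall htail
    rw [Nat.sub_eq_zero_of_le (by omega)] at this
    exact Or.inl ⟨u.length, hlen, by simpa using this⟩
  refine Or.inr ⟨u.take (u.length - (d - 1)), ?_, ?_⟩
  · have hlast :
        (u.take (u.length - (d - 1))).getLast? = some (u[u.length - d]'(by omega)) := by
      rw [List.getLast?_eq_getElem?]
      simp [List.getElem?_take, show u.length - (d - 1) - 1 = u.length - d by omega]
      omega
    have := h.2 (by omega)
    simp only [List.getElem_append_left (show u.length - d < u.length by omega)] at this
    rwa [hlast, Option.some_inj, Option.some_inj]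
  · conv_lhs => rw [← List.take_append_drop (u.length - (d - 1)) u,
      List.drop_eq_replicate_of_forall htail]
    congr 2
    omega

lemma capAt_append_replicate (hy : y.getLast? = some c ∨ y.getLast? = some X) :
    CapAt d X c (y ++ List.replicate (d - 1) c ++ [X]) (y.length + (d - 1)) (by simp) := by
  have hy0 : y ≠ [] := by rintro rfl; simp at hy
  have hlen := List.length_pos_iff.2 hy0
  refine ⟨fun i hi1 hi2 _ => ?_, fun hdm => ?_⟩
  · rw [List.getElem_append_left (by simp; omega), List.getElem_append_right (by omega),
      List.getElem_replicate]
  · rcases Nat.eq_zero_or_pos d with rfl | hd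
    · simp
    rw [List.getElem_append_left (by simp; omega), List.getElem_append_left (by omega)]
    rw [List.getLast?_eq_getElem?, List.getElem?_eq_getElem (by omega)] at hy
    simpa [show y.length + (d - 1) - d = y.length - 1 by omega] using hy

lemma exists_eq_append_replicate (hd : 1 ≤ d) (hc : c.wt = 2) (hX : X.wt = 3)
    (hu : CapRule d X c (u ++ [X])) (hw : 2 * d + 1 < wtWord (u ++ [X])) :
    ∃ y, (y.getLast? = some c ∨ y.getLast? = some X) ∧ u = y ++ List.replicate (d - 1) c := by
  refine ((hu u.length (by simp) (by simp)).eq_replicate_or_eq_append hd).resolve_left ?_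
  rintro ⟨j, hj, rfl⟩
  rw [wtWord_append, wtWord_replicate, wtWord_singleton, hc, hX] at hw
  omega

end CapRule

section Prefix

variable {X c : Letter} {k : ℕ} {u v : List Letter}

lemma notMem_take_iff {x : List Letter} :
    X ∉ x.take k ↔ ∀ m (hm : m < x.length), m < k → x.get ⟨m, hm⟩ ≠ X := by
  simp only [List.mem_iff_getElem, List.getElem_take, List.length_take, lt_min_iff,
    List.get_eq_getElem]
  exact ⟨fun h m hm hmk hX => h ⟨m, ⟨hmk, hm⟩, hX⟩, fun h ⟨m, hm, hX⟩ => h m hm.2 hm.1 hX⟩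

lemma notMem_take_of_append (h : X ∉ (u ++ v).take k) : X ∉ u.take k := by
  rw [List.take_append] at h
  exact fun hu => h (List.mem_append_left _ hu)

lemma notMem_take_append (hu : X ∉ u.take k) (hv : X ∉ v) : X ∉ (u ++ v).take k := by
  rw [List.take_append, List.mem_append, not_or]
  exact ⟨hu, fun h => hv (List.mem_of_mem_take h)⟩

lemma notMem_take_append_replicate {d : ℕ} (hc : c ≠ X) (hu0 : u ≠ []) (hk : k ≤ d)
    (hu : X ∉ u.take k) : X ∉ (u ++ List.replicate (d - 1) c ++ [X]).take k := by
  have hlen := List.length_pos_iff.2 hu0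
  rw [List.append_assoc, List.take_append, List.mem_append, not_or,
    List.take_append_of_le_length (by simp; omega)]
  exact ⟨hu, fun h => hc (List.eq_of_mem_replicate (List.mem_of_mem_take h)).symm⟩

end Prefix

structure Admissible (d k : ℕ) (x : List Letter) : Prop where
  capRule_A : CapRule d .A .a x
  capRule_B : CapRule d .B .b x
  A_notMem_take : .A ∉ x.take k
  B_notMem_take : .B ∉ x.take d

namespace Admissible

variable {d k : ℕ} {u v x : List Letter}

lemma of_append (h : Admissible d k (u ++ v)) : Admissible d k u :=
  ⟨h.1.of_append, h.2.of_append, notMem_take_of_append h.3, notMem_take_of_append h.4⟩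

lemma append (hu : Admissible d k u) (hA : .A ∉ v) (hB : .B ∉ v) : Admissible d k (u ++ v) :=
  ⟨hu.1.append_of_notMem hA, hu.2.append_of_notMem hB, notMem_take_append hu.3 hA,
    notMem_take_append hu.4 hB⟩

lemma of_notMem (hA : .A ∉ x) (hB : .B ∉ x) : Admissible d k x :=
  ⟨capRule_of_notMem hA, capRule_of_notMem hB, fun h => hA (List.mem_of_mem_take h),
    fun h => hB (List.mem_of_mem_take h)⟩

lemma append_blockA (hk : k ≤ d) (hu : Admissible d k u)
    (hlast : u.getLast? = some .a ∨ u.getLast? = some .A) :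
    Admissible d k (u ++ List.replicate (d - 1) .a ++ [.A]) := by
  have hu0 : u ≠ [] := by rintro rfl; simp at hlast
  have hB : Letter.B ∉ List.replicate (d - 1) .a ++ [.A] := by simp
  refine ⟨(hu.1.append_of_notMem (by simp)).concat ?_, ?_,
    notMem_take_append_replicate (by decide) hu0 hk hu.3, ?_⟩
  · simpa using capAt_append_replicate (d := d) hlast
  · simpa [List.append_assoc] using hu.2.append_of_notMem hB
  · simpa [List.append_assoc] using notMem_take_append hu.4 hB

lemma append_blockB (hu : Admissible d k u)
    (hlast : u.getLast? = some .b ∨ u.getLast? = some .B) :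
    Admissible d k (u ++ List.replicate (d - 1) .b ++ [.B]) := by
  have hu0 : u ≠ [] := by rintro rfl; simp at hlast
  have hA : Letter.A ∉ List.replicate (d - 1) .b ++ [.B] := by simp
  refine ⟨?_, (hu.2.append_of_notMem (by simp)).concat ?_,
    ?_, notMem_take_append_replicate (by decide) hu0 le_rfl hu.4⟩
  · simpa [List.append_assoc] using hu.1.append_of_notMem hA
  · simpa using capAt_append_replicate (d := d) hlast
  · simpa [List.append_assoc] using notMem_take_append hu.3 hA

end Admissible

variable {d k n : ℕ}

def words (d k n : ℕ) : Set (List Letter) := {x | Admissible d k x ∧ wtWord x = n}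

def endingIn (d k n : ℕ) (e : Letter) : Set (List Letter) :=
  {x ∈ words d k n | x.getLast? = some e}

lemma words_finite (d k n : ℕ) : (words d k n).Finite :=
  (finite_setOf_wtWord_eq n).subset fun _ hx => hx.2

lemma endingIn_finite (d k n : ℕ) (e : Letter) : (endingIn d k n e).Finite :=
  (words_finite d k n).subset fun _ hx => hx.1

lemma disjoint_endingIn {e e' : Letter} (h : e ≠ e') :
    Disjoint (endingIn d k n e) (endingIn d k n e') :=
  Set.disjoint_left.2 fun _ hx hx' => h (Option.some_injective _ (hx.2.symm.trans hx'.2))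

lemma cn_eq_ncard_union (d n k : ℕ) : cn d n k = (words d k n ∪ words d k (n + 1)).ncard := by
  rw [cn]
  congr 1
  ext x
  simp only [words, Set.mem_ofPred_eq, Set.mem_union, dLegal_iff_capRule, ← notMem_take_iff]
  exact ⟨fun ⟨⟨hA, hB⟩, hw, hk, hd⟩ => hw.imp (⟨⟨hA, hB, hk, hd⟩, ·⟩) (⟨⟨hA, hB, hk, hd⟩, ·⟩),
    fun h => by rcases h with ⟨⟨hA, hB, hk, hd⟩, hw⟩ | ⟨⟨hA, hB, hk, hd⟩, hw⟩ <;> tauto⟩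

lemma cn_eq_ncard_words (d n k : ℕ) :
    cn d n k = (words d k n).ncard + (words d k (n + 1)).ncard := by
  rw [cn_eq_ncard_union, Set.ncard_union_eq _ (words_finite d k n) (words_finite d k (n + 1))]
  exact Set.disjoint_left.2 fun x hn hn1 => by have := hn.2.symm.trans hn1.2; omega

lemma words_eq_iUnion (hn : 1 ≤ n) : words d k n = ⋃ e, endingIn d k n e := by
  ext x
  simp only [endingIn, Set.mem_iUnion, Set.mem_ofPred_eq]
  refine ⟨fun hx => ?_, fun ⟨_, hx, _⟩ => hx⟩
  have hne : x.getLast? ≠ none := by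
    rw [Ne, List.getLast?_eq_none_iff]
    rintro rfl
    simp [words, wtWord] at hx
    omega
  obtain ⟨e, he⟩ := Option.ne_none_iff_exists'.1 hne
  exact ⟨e, hx, he⟩

lemma ncard_words (hn : 1 ≤ n) : (words d k n).ncard = (endingIn d k n .a).ncard +
    (endingIn d k n .b).ncard + (endingIn d k n .A).ncard + (endingIn d k n .B).ncard := by
  rw [words_eq_iUnion hn, Set.ncard_iUnion_of_finite (endingIn_finite d k n) fun _ _ h =>
    disjoint_endingIn h, finsum_eq_sum_of_fintype, Letter.sum_univ]

lemma ncard_endingIn_lower {e : Letter} (he : e = .a ∨ e = .b) :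
    (endingIn d k (n + 2) e).ncard = (words d k n).ncard := by
  have hwt : e.wt = 2 := by rcases he with rfl | rfl <;> rfl
  suffices endingIn d k (n + 2) e = (· ++ [e]) '' words d k n by
    rw [this, Set.ncard_image_of_injective _ (List.append_left_injective _)]
  ext x
  constructor
  · rintro ⟨⟨hx, hw⟩, hlast⟩
    obtain ⟨u, rfl⟩ := List.getLast?_eq_some_iff.1 hlast
    rw [wtWord_append, wtWord_singleton, hwt] at hw
    exact ⟨u, ⟨hx.of_append, by omega⟩, rfl⟩
  · rintro ⟨u, ⟨hu, hw⟩, rfl⟩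
    refine ⟨⟨hu.append ?_ ?_, by rw [wtWord_append, wtWord_singleton, hwt, hw]⟩,
      List.getLast?_concat⟩ <;> rcases he with rfl | rfl <;> simp

lemma ncard_endingIn_capital {c X : Letter} (hd : 1 ≤ d) (hn : 1 ≤ n) (hc : c.wt = 2)
    (hX : X.wt = 3) (hrule : ∀ {x}, Admissible d k x → CapRule d X c x)
    (hblock : ∀ {y}, Admissible d k y → (y.getLast? = some c ∨ y.getLast? = some X) →
      Admissible d k (y ++ List.replicate (d - 1) c ++ [X])) :
    (endingIn d k (n + (2 * d + 1)) X).ncard =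
      (endingIn d k n c).ncard + (endingIn d k n X).ncard := by
  have hinj : Function.Injective (· ++ List.replicate (d - 1) c ++ [X]) :=
    (List.append_left_injective [X]).comp (List.append_left_injective _)
  suffices endingIn d k (n + (2 * d + 1)) X = (· ++ List.replicate (d - 1) c ++ [X]) ''
      {y ∈ words d k n | y.getLast? = some c ∨ y.getLast? = some X} by
    rw [this, Set.ncard_image_of_injective _ hinj, Set.sep_or]
    exact Set.ncard_union_eq (disjoint_endingIn (by rintro rfl; omega))
      (endingIn_finite d k n c) (endingIn_finite d k n X)
  ext x
  constructor
  · rintro ⟨⟨hx, hw⟩, hlast⟩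
    obtain ⟨u, rfl⟩ := List.getLast?_eq_some_iff.1 hlast
    obtain ⟨y, hy, rfl⟩ := exists_eq_append_replicate hd hc hX (hrule hx) (by omega)
    rw [wtWord_append_replicate_concat hd hc hX] at hw
    exact ⟨y, ⟨⟨hx.of_append.of_append, by omega⟩, hy⟩, rfl⟩
  · rintro ⟨y, ⟨⟨hy, hw⟩, hlast⟩, rfl⟩
    exact ⟨⟨hblock hy hlast, by rw [wtWord_append_replicate_concat hd hc hX, hw]⟩,
      List.getLast?_concat⟩

lemma ncard_words_add (hd : 1 ≤ d) (hk : k ≤ d) (n : ℕ) :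
    (words d k (n + 2 * d + 2)).ncard =
      2 * (words d k (n + 2 * d)).ncard + (words d k (n + 1)).ncard := by
  have hA := ncard_endingIn_capital (k := k) (n := n + 1) hd (by omega) rfl rfl
    Admissible.capRule_A (·.append_blockA hk ·)
  have hB := ncard_endingIn_capital (k := k) (n := n + 1) hd (by omega) rfl rfl
    Admissible.capRule_B (·.append_blockB ·)
  rw [show n + 1 + (2 * d + 1) = n + 2 * d + 2 by ring] at hA hB
  rw [ncard_words (by omega), ncard_words (n := n + 1) (by omega),
    ncard_endingIn_lower (Or.inl rfl), ncard_endingIn_lower (Or.inr rfl), hA, hB]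
  ring

lemma cn_add (hd : 1 ≤ d) (hk : k ≤ d) (n : ℕ) :
    cn d (n + 2 * d + 2) k = 2 * cn d (n + 2 * d) k + cn d (n + 1) k := by
  have h₁ := ncard_words_add (k := k) hd hk n
  have h₂ := ncard_words_add (k := k) hd hk (n + 1)
  rw [show n + 1 + 2 * d + 2 = n + 2 * d + 2 + 1 by ring,
    show n + 1 + 2 * d = n + 2 * d + 1 by ring] at h₂
  simp only [cn_eq_ncard_words]
  omega

def lowerWord {m : ℕ} (f : Fin m → Bool) : List Letter := List.ofFn fun i => cond (f i) .a .b

lemma lowerWord_injective (m : ℕ) : Function.Injective (lowerWord (m := m)) := fun f g h =>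
  funext fun i => by
    have := congrFun (List.ofFn_injective h) i
    cases hf : f i <;> cases hg : g i <;> simp_all

lemma mem_lowerWord {m : ℕ} {f : Fin m → Bool} {e : Letter} (he : e ∈ lowerWord f) :
    e = .a ∨ e = .b := by
  obtain ⟨i, rfl⟩ := List.mem_ofFn.1 he
  cases f i <;> simp

lemma wtWord_lowerWord {m : ℕ} (f : Fin m → Bool) : wtWord (lowerWord f) = 2 * m := by
  have (i : Fin m) : (cond (f i) Letter.a .b).wt = 2 := by cases f i <;> rfl
  simp [wtWord, lowerWord, List.sum_ofFn, this, mul_comm]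

lemma two_pow_le_cn (d k n : ℕ) : 2 ^ ((n + 1) / 2) ≤ cn d n k := by
  have hsub : Set.range (lowerWord (m := (n + 1) / 2)) ⊆ words d k n ∪ words d k (n + 1) := by
    rintro _ ⟨f, rfl⟩
    have hadm : Admissible d k (lowerWord f) :=
      .of_notMem (fun h => by simpa using mem_lowerWord h) (fun h => by simpa using mem_lowerWord h)
    rcases Nat.even_or_odd n with ⟨j, rfl⟩ | ⟨j, rfl⟩
    · exact Or.inl ⟨hadm, by rw [wtWord_lowerWord]; omega⟩
    · exact Or.inr ⟨hadm, by rw [wtWord_lowerWord]; omega⟩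
  calc 2 ^ ((n + 1) / 2) = (Set.range (lowerWord (m := (n + 1) / 2))).ncard := by
        rw [← Set.image_univ, Set.ncard_image_of_injective _ (lowerWord_injective _),
          Set.ncard_univ, Nat.card_fun]
        simp
    _ ≤ cn d n k := cn_eq_ncard_union d n k ▸
        Set.ncard_le_ncard hsub ((words_finite d k n).union (words_finite d k (n + 1)))

end LegalWords

section Window

noncomputable def windowMax (h : ℕ → ℝ) (r n : ℕ) : ℝ :=
  (Finset.range (r + 2)).sup' Finset.nonempty_range_add_one fun t => h (n + t)

noncomputable def windowMin (h : ℕ → ℝ) (r n : ℕ) : ℝ :=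
  (Finset.range (r + 2)).inf' Finset.nonempty_range_add_one fun t => h (n + t)

variable {r : ℕ} {h : ℕ → ℝ}

lemma le_windowMax {t : ℕ} (n : ℕ) (ht : t < r + 2) : h (n + t) ≤ windowMax h r n :=
  Finset.le_sup' (fun t => h (n + t)) (Finset.mem_range.mpr ht)

lemma windowMin_le {t : ℕ} (n : ℕ) (ht : t < r + 2) : windowMin h r n ≤ h (n + t) :=
  Finset.inf'_le (fun t => h (n + t)) (Finset.mem_range.mpr ht)

lemma windowMin_le_windowMax (n : ℕ) : windowMin h r n ≤ windowMax h r n :=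
  (windowMin_le n (t := 0) (by omega)).trans (le_windowMax n (by omega))

end Window

structure ConvexRecurrence (p q : ℝ) (r : ℕ) (h : ℕ → ℝ) : Prop where
  pos_left : 0 < p
  pos_right : 0 < q
  add_eq_one : p + q = 1
  eq_add : ∀ n, h (n + r + 2) = p * h (n + r) + q * h n

namespace ConvexRecurrence

variable {p q : ℝ} {r : ℕ} {h : ℕ → ℝ}

lemma neg (H : ConvexRecurrence p q r h) : ConvexRecurrence p q r (-h) :=
  ⟨H.1, H.2, H.3, fun n => by simp only [Pi.neg_apply, H.4]; ring⟩

lemma le_of_forall_window_le (H : ConvexRecurrence p q r h) {n : ℕ} {B : ℝ}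
    (hB : ∀ t < r + 2, h (n + t) ≤ B) : ∀ i, n ≤ i → h i ≤ B := by
  intro i
  induction i using Nat.strong_induction_on with
  | _ i ih =>
    intro hni
    by_cases hi : i < n + (r + 2)
    · simpa [Nat.add_sub_cancel' hni] using hB (i - n) (by omega)
    obtain ⟨j, rfl⟩ : ∃ j, i = j + r + 2 := ⟨i - (r + 2), by omega⟩
    rw [H.eq_add]
    have h₁ := mul_le_mul_of_nonneg_left (ih (j + r) (by omega) (by omega)) H.pos_left.le
    have h₂ := mul_le_mul_of_nonneg_left (ih j (by omega) (by omega)) H.pos_right.le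
    linear_combination h₁ + h₂ + B * H.add_eq_one

lemma le_windowMax_of_le (H : ConvexRecurrence p q r h) {n i : ℕ} (hi : n ≤ i) :
    h i ≤ windowMax h r n :=
  H.le_of_forall_window_le (fun _ ht => le_windowMax n ht) i hi

lemma windowMin_le_of_le (H : ConvexRecurrence p q r h) {n i : ℕ} (hi : n ≤ i) :
    windowMin h r n ≤ h i := by
  simpa using H.neg.le_of_forall_window_le (fun _ ht => neg_le_neg (windowMin_le n ht)) i hi

lemma windowMax_antitone (H : ConvexRecurrence p q r h) : Antitone (windowMax h r) :=
  fun _ _ hmn => Finset.sup'_le _ _ fun _ _ => H.le_windowMax_of_le (by omega)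

lemma windowMin_monotone (H : ConvexRecurrence p q r h) : Monotone (windowMin h r) :=
  fun _ _ hmn => Finset.le_inf' _ _ fun _ _ => H.windowMin_le_of_le (by omega)

lemma pow_mul_sub_le_sub_add_mul (H : ConvexRecurrence p q r h) {n j : ℕ} (hj : n ≤ j)
    (a : ℕ) : q ^ a * (windowMax h r n - h j) ≤ windowMax h r n - h (j + a * (r + 2)) := by
  induction a with
  | zero => simp
  | succ a ih =>
    rw [show j + (a + 1) * (r + 2) = j + a * (r + 2) + r + 2 by ring, H.eq_add, pow_succ]
    have hmax := mul_le_mul_of_nonneg_left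
      (H.le_windowMax_of_le (n := n) (i := j + a * (r + 2) + r) (by omega)) H.pos_left.le
    have hstep := mul_le_mul_of_nonneg_left ih H.pos_right.le
    linear_combination hstep + hmax + windowMax h r n * H.add_eq_one

lemma pow_mul_sub_le_sub_add_two_mul (H : ConvexRecurrence p q r h) {n i : ℕ} (hi : n + r ≤ i)
    (b : ℕ) : p ^ b * (windowMax h r n - h i) ≤ windowMax h r n - h (i + 2 * b) := by
  induction b with
  | zero => simp
  | succ b ih =>
    rw [show i + 2 * (b + 1) = (i + 2 * b - r) + r + 2 by omega, H.eq_add,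
      show i + 2 * b - r + r = i + 2 * b by omega, pow_succ]
    have hmax := mul_le_mul_of_nonneg_left
      (H.le_windowMax_of_le (n := n) (i := i + 2 * b - r) (by omega)) H.pos_right.le
    have hstep := mul_le_mul_of_nonneg_left ih H.pos_left.le
    linear_combination hstep + hmax + windowMax h r n * H.add_eq_one

lemma windowMax_add_le (H : ConvexRecurrence p q r h) (hr : Odd r) (n : ℕ) :
    windowMax h r (n + 3 * (r + 2)) ≤ windowMax h r n -
      q ^ 2 * p ^ (2 * (r + 2)) * (windowMax h r n - windowMin h r n) := by
  have hp := H.pos_left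
  have hq := H.pos_right
  set M := windowMax h r n
  obtain ⟨t₀, ht₀, hmin⟩ := Finset.exists_mem_eq_inf' Finset.nonempty_range_add_one
    (fun t => h (n + t))
  rw [Finset.mem_range] at ht₀
  change windowMin h r n = h (n + t₀) at hmin
  have hgap : 0 ≤ M - h (n + t₀) := hmin ▸ sub_nonneg.2 (windowMin_le_windowMax n)
  refine Finset.sup'_le _ _ fun t ht => ?_
  rw [Finset.mem_range] at ht
  obtain ⟨c, rfl⟩ := hr
  -- Since the step `r + 2` is odd, the index is reached from `n + t₀` by one or two steps
  -- of length `r + 2` followed by steps of length `2`.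
  obtain ⟨a, b, ha, ha2, hb, hidx⟩ : ∃ a b, 1 ≤ a ∧ a ≤ 2 ∧ b ≤ 2 * (2 * c + 1 + 2) ∧
      n + 3 * (2 * c + 1 + 2) + t = n + t₀ + a * (2 * c + 1 + 2) + 2 * b := by
    rcases Nat.even_or_odd (t + 2 * c + 3 - t₀) with ⟨b, hb⟩ | ⟨b, hb⟩
    · exact ⟨2, b, by omega, le_rfl, by omega, by omega⟩
    · exact ⟨1, b + c + 2, le_rfl, by omega, by omega, by omega⟩
  have hdef : q ^ a * p ^ b * (M - h (n + t₀)) ≤ M - h (n + 3 * (2 * c + 1 + 2) + t) := by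
    rw [hidx, mul_comm (q ^ a), mul_assoc]
    exact (mul_le_mul_of_nonneg_left (H.pow_mul_sub_le_sub_add_mul le_self_add a)
      (by positivity)).trans (H.pow_mul_sub_le_sub_add_two_mul (by nlinarith) b)
  have hq1 : q ^ 2 ≤ q ^ a := pow_le_pow_of_le_one hq.le (by linarith [H.add_eq_one]) ha2
  have hp1 : p ^ (2 * (2 * c + 1 + 2)) ≤ p ^ b :=
    pow_le_pow_of_le_one hp.le (by linarith [H.add_eq_one]) hb
  rw [hmin]
  nlinarith [mul_le_mul (mul_le_mul hq1 hp1 (by positivity) (by positivity)) le_rfl hgap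
    (by positivity)]

theorem exists_tendsto (H : ConvexRecurrence p q r h) (hr : Odd r) :
    ∃ L, Tendsto h atTop (𝓝 L) := by
  set M := windowMax h r
  set μ := windowMin h r
  have hM := tendsto_atTop_ciInf H.windowMax_antitone
    ⟨μ 0, Set.forall_mem_range.2 fun n =>
      (H.windowMin_monotone (Nat.zero_le n)).trans (windowMin_le_windowMax n)⟩
  have hμ := tendsto_atTop_ciSup H.windowMin_monotone
    ⟨M 0, Set.forall_mem_range.2 fun n =>
      (windowMin_le_windowMax n).trans (H.windowMax_antitone (Nat.zero_le n))⟩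
  set L := ⨅ n, M n
  set ℓ := ⨆ n, μ n
  set ε := q ^ 2 * p ^ (2 * (r + 2))
  have hℓL : ℓ ≤ L := le_of_tendsto_of_tendsto' hμ hM windowMin_le_windowMax
  have hcontr : L ≤ L - ε * (L - ℓ) :=
    le_of_tendsto_of_tendsto' (hM.comp (tendsto_add_atTop_nat _))
      (hM.sub ((hM.sub hμ).const_mul ε)) (H.windowMax_add_le hr)
  have hLℓ : L = ℓ := by
    have : 0 < ε := by have := H.pos_left; have := H.pos_right; positivity
    nlinarith
  refine ⟨L, tendsto_of_tendsto_of_tendsto_of_le_of_le (hLℓ ▸ hμ) hM (fun n => ?_) fun n => ?_⟩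
  · simpa using windowMin_le (h := h) n (t := 0) (by omega)
  · simpa using le_windowMax (h := h) n (t := 0) (by omega)

theorem exists_pos_tendsto (H : ConvexRecurrence p q r h) (hr : Odd r) (hpos : ∀ n, 0 < h n) :
    ∃ L, 0 < L ∧ Tendsto h atTop (𝓝 L) := by
  obtain ⟨L, hL⟩ := H.exists_tendsto hr
  have hμ : 0 < windowMin h r 0 := (Finset.lt_inf'_iff _).2 fun _ _ => hpos _
  exact ⟨L, hμ.trans_le (ge_of_tendsto' hL fun n => H.windowMin_le_of_le (Nat.zero_le n)), hL⟩

end ConvexRecurrence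

theorem LegalWords.exists_tendsto_cn_div_pow {d k : ℕ} (hd : 1 ≤ d) (hk : k ≤ d) {μ : ℝ}
    (hμ : 0 < μ) (hchar : μ ^ (2 * d - 1) * (μ ^ 2 - 2) = 1) :
    ∃ L, 0 < L ∧ Tendsto (fun n => (cn d n k : ℝ) / μ ^ n) atTop (𝓝 L) := by
  have hpq : 2 / μ ^ 2 + 1 / μ ^ (2 * d + 1) = 1 := by
    rw [show 2 * d + 1 = 2 * d - 1 + 2 by omega, pow_add]
    field_simp
    linear_combination -hchar
  set h : ℕ → ℝ := fun n => (cn d (n + 1) k : ℝ) / μ ^ (n + 1) with h_def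
  have hrec (n : ℕ) : h (n + (2 * d - 1) + 2) =
      2 / μ ^ 2 * h (n + (2 * d - 1)) + 1 / μ ^ (2 * d + 1) * h n := by
    simp only [h_def]
    rw [show n + (2 * d - 1) + 2 + 1 = n + 2 * d + 2 by omega,
      show n + (2 * d - 1) + 1 = n + 2 * d by omega, cn_add hd hk]
    push_cast
    field_simp
    ring
  have H : ConvexRecurrence _ _ (2 * d - 1) h := ⟨by positivity, by positivity, hpq, hrec⟩
  obtain ⟨L, hL, hlim⟩ := H.exists_pos_tendsto ⟨d - 1, by omega⟩ fun n =>
    div_pos (Nat.cast_pos.2 (Nat.one_le_two_pow.trans (two_pow_le_cn d k _))) (by positivity)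
  exact ⟨L, hL, (tendsto_add_atTop_iff_nat 1).1 hlim⟩

/-- For fixed `d ≥ 1` and any `0 ≤ k ≤ d−1`, the sequence `c_n(k)`
satisfies `c_n(k) ≥ 2^⌈n/2⌉`, and `c_n(k) ~ r_k·λ(d)^(n/2)` as `n → ∞` for some constant
`r_k > 0`, where `λ(d)` is the unique positive solution of `λ^(d−1/2)(λ−2) = 1`. -/
theorem stmt15 (d : ℕ) (hd : 1 ≤ d) (l : ℝ) (hl : 0 < l)
    (hleq : l ^ ((d : ℝ) - 1 / 2) * (l - 2) = 1) (k : ℕ) (hk : k ≤ d - 1) :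
    (∀ n : ℕ, (2 : ℕ) ^ ((n + 1) / 2) ≤ cn d n k) ∧
    ∃ r : ℝ, 0 < r ∧
      Tendsto (fun n : ℕ => (cn d n k : ℝ) / l ^ ((n : ℝ) / 2)) atTop (nhds r) := by
  refine ⟨LegalWords.two_pow_le_cn d k, ?_⟩
  have hpow (m : ℕ) : l ^ ((m : ℝ) / 2) = √l ^ m := by
    rw [Real.rpow_div_two_eq_sqrt _ hl.le, Real.rpow_natCast]
  have hchar : √l ^ (2 * d - 1) * (√l ^ 2 - 2) = 1 := by
    rw [← hpow, Nat.cast_sub (by omega), Real.sq_sqrt hl.le, ← hleq]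
    push_cast
    ring_nf
  simpa only [hpow] using
    LegalWords.exists_tendsto_cn_div_pow hd (by omega) (Real.sqrt_pos.2 hl) hchar
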